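/- Let K, K₀ ∈ 𝒦^{n*} and let r = d_H(K,K₀) be their Hausdorff distance. Then δ^c(K) ≤ (1+r)^{2n}·δ^c(K₀). -/

import Mathlib

open Metric Set Pointwise MeasureTheory Filter ENNReal

/-- The density of the system of congruent copies `{g(K) : g ∈ S}` of `K`, for a set `S` of
isometries of `ℝⁿ`: `limsup_{R → ∞} (∑_{g ∈ S} vol(g(K) ∩ R·Bⁿ)) / vol(R·Bⁿ)`. -/
noncomputable def congrDensity (n : ℕ)
    (S : Set (EuclideanSpace ℝ (Fin n) ≃ᵢ EuclideanSpace ℝ (Fin n)))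
    (K : Set (EuclideanSpace ℝ (Fin n))) : ℝ≥0∞ :=
  Filter.limsup
    (fun R : ℝ =>
      (∑' g : S, volume (((g : EuclideanSpace ℝ (Fin n) ≃ᵢ EuclideanSpace ℝ (Fin n)) '' K) ∩
        closedBall 0 R)) / volume (closedBall (0 : EuclideanSpace ℝ (Fin n)) R))
    Filter.atTop

/-- The congruent packing density `δ^c(K)`: the supremum of the densities of countable families
of congruent copies of `K` having pairwise disjoint interiors. -/
noncomputable def deltaC (n : ℕ) (K : Set (EuclideanSpace ℝ (Fin n))) : ℝ≥0∞ :=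
  ⨆ (S : Set (EuclideanSpace ℝ (Fin n) ≃ᵢ EuclideanSpace ℝ (Fin n)))
    (_ : S.Countable ∧ S.Pairwise fun g h => interior (g '' K) ∩ interior (h '' K) = ∅),
    congrDensity n S K

/-!
Put `c = 1 + r`. Since both bodies contain the unit ball and are convex, the `r`-neighbourhood of
one is inside `c` times the other, so `K ⊆ c • K₀` and `L := c⁻¹ • K₀ ⊆ K`. In a packing of `K`,
replace every copy `g K` by the smaller copy `g L`: this is a packing of `L`, each copy loses
volume by a factor at most `vol K / vol L ≤ c ^ (2 n)`, and since a copy meeting the ball of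
radius `R` lies in the ball of radius `R + diam K`, the boundary effect vanishes in the limit.
Finally, conjugating the isometries by the dilation `x ↦ c • x` turns a packing of `L` into a
packing of `K₀ = c • L` of the same density.
-/

open Topology

section Convex

variable {E : Type*} [NormedAddCommGroup E] [NormedSpace ℝ E]

theorem subset_one_add_hausdorffDist_smul {X Y : Set E} (hX : IsCompact X) (hXc : Convex ℝ X)
    (hB : closedBall (0 : E) 1 ⊆ X) (hY : Bornology.IsBounded Y) :
    Y ⊆ (1 + hausdorffDist Y X) • X := by
  intro y hy
  have hXne : X.Nonempty := ⟨0, hB (mem_closedBall_self zero_le_one)⟩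
  obtain ⟨x, hx, hxy⟩ := hX.exists_infDist_eq_dist hXne y
  have hyx : y - x ∈ hausdorffDist Y X • X := by
    refine smul_set_mono hB ?_
    rw [smul_unitClosedBall_of_nonneg hausdorffDist_nonneg, mem_closedBall_zero_iff,
      ← dist_eq_norm, ← hxy]
    exact infDist_le_hausdorffDist_of_mem hy
      (hausdorffEDist_ne_top_of_nonempty_of_bounded ⟨y, hy⟩ hXne hY hX.isBounded)
  rw [hXc.add_smul zero_le_one hausdorffDist_nonneg, one_smul]
  simpa using add_mem_add hx hyx

end Convex

section Volume

variable {V : Type*} [NormedAddCommGroup V] [InnerProductSpace ℝ V] [FiniteDimensional ℝ V]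
  [MeasurableSpace V] [BorelSpace V]

theorem Isometry.volume_image {f : V → V} (hf : Isometry f) (s : Set V) :
    volume (f '' s) = volume s := by
  rw [← InnerProductSpace.euclideanHausdorffMeasure_eq_volume, hf.euclideanHausdorffMeasure_image]

theorem tendsto_volume_closedBall_add_div_volume_closedBall (D : ℝ) :
    Tendsto (fun R => volume (closedBall (0 : V) (R + D)) / volume (closedBall (0 : V) R))
      atTop (𝓝 1) := by
  have hlim :
      Tendsto (fun R : ℝ => ENNReal.ofReal ((1 + D / R) ^ Module.finrank ℝ V)) atTop (𝓝 1) := by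
    simpa using (ENNReal.tendsto_ofReal
      ((tendsto_const_nhds.add (tendsto_const_nhds.div_atTop tendsto_id)).pow _) :
      Tendsto _ atTop (𝓝 (ENNReal.ofReal ((1 + 0) ^ Module.finrank ℝ V))))
  refine hlim.congr' ?_
  filter_upwards [eventually_gt_atTop 0, eventually_ge_atTop (-D)] with R hR hRD
  rw [Measure.addHaar_closedBall' volume _ (by linarith),
    Measure.addHaar_closedBall' volume _ hR.le,
    ENNReal.mul_div_mul_right _ _ (measure_closedBall_pos volume 0 one_pos).ne'
      measure_closedBall_lt_top.ne, ← ENNReal.ofReal_div_of_pos (by positivity), ← div_pow,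
    add_div, div_self hR.ne']

theorem volume_le_of_subset_smul {A B : Set V} {c : ℝ} (hc : 0 ≤ c) (h : A ⊆ c • B) :
    volume A ≤ ENNReal.ofReal (c ^ Module.finrank ℝ V) * volume B :=
  (measure_mono h).trans_eq (Measure.addHaar_smul_of_nonneg _ hc _)

theorem limsup_add_div_volume_closedBall_le (F : ℝ → ℝ≥0∞) (D : ℝ) :
    limsup (fun R => F (R + D) / volume (closedBall (0 : V) R)) atTop ≤
      limsup (fun R => F R / volume (closedBall (0 : V) R)) atTop := by
  set f := fun R => F R / volume (closedBall (0 : V) R)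
  set q := fun R => volume (closedBall (0 : V) (R + D)) / volume (closedBall (0 : V) R)
  have hq : limsup q atTop = 1 := (tendsto_volume_closedBall_add_div_volume_closedBall D).limsup_eq
  have hshift : limsup (fun R => f (R + D)) atTop = limsup f atTop := by
    rw [← Function.comp_def, limsup_comp, map_add_atTop_eq]
  calc limsup (fun R => F (R + D) / volume (closedBall (0 : V) R)) atTop
      = limsup (fun R => f (R + D) * q R) atTop := by
        refine limsup_congr ?_
        filter_upwards [eventually_gt_atTop (-D)] with R hR
        rw [← mul_div_assoc, ENNReal.div_mul_cancel
          (measure_closedBall_pos volume 0 (by linarith)).ne' measure_closedBall_lt_top.ne]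
    _ ≤ limsup (fun R => f (R + D)) atTop * limsup q atTop :=
        ENNReal.limsup_mul_le' (Or.inr (by simp [hq])) (Or.inr (by simp [hq]))
    _ = limsup f atTop := by rw [hshift, hq, mul_one]

end Volume

section SMulConj

variable {V : Type*} [NormedAddCommGroup V] [NormedSpace ℝ V] {c : ℝ}

noncomputable def IsometryEquiv.smulConj (c : ℝ) (hc : c ≠ 0) (g : V ≃ᵢ V) : V ≃ᵢ V where
  toFun x := c • g (c⁻¹ • x)
  invFun x := c • g.symm (c⁻¹ • x)
  left_inv x := by simp [inv_smul_smul₀ hc, smul_inv_smul₀ hc]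
  right_inv x := by simp [inv_smul_smul₀ hc, smul_inv_smul₀ hc]
  isometry_toFun := Isometry.of_dist_eq fun x y => by
    rw [dist_smul₀, g.dist_eq, dist_smul₀, ← mul_assoc, norm_inv,
      mul_inv_cancel₀ (norm_ne_zero_iff.2 hc), one_mul]

theorem closedBall_zero_abs_mul (hc : c ≠ 0) (R : ℝ) :
    closedBall (0 : V) (|c| * R) = c • closedBall 0 R := by
  rw [smul_closedBall' hc, smul_zero, Real.norm_eq_abs]

namespace IsometryEquiv

theorem smulConj_apply (hc : c ≠ 0) (g : V ≃ᵢ V) (x : V) : smulConj c hc g x = c • g (c⁻¹ • x) :=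
  rfl

theorem smulConj_image_smul (hc : c ≠ 0) (g : V ≃ᵢ V) (A : Set V) :
    smulConj c hc g '' (c • A) = c • (g '' A) := by
  simp only [← image_smul, image_image, smulConj_apply, inv_smul_smul₀ hc]

theorem smulConj_injective (hc : c ≠ 0) : Function.Injective (smulConj (V := V) c hc) := by
  intro g g' h
  ext x
  simpa [smulConj_apply, inv_smul_smul₀ hc, smul_right_injective V hc |>.eq_iff] using
    congr($h (c • x))

end IsometryEquiv

end SMulConj

section Density

open IsometryEquiv

variable {n : ℕ} {S : Set (EuclideanSpace ℝ (Fin n) ≃ᵢ EuclideanSpace ℝ (Fin n))}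
  {K L : Set (EuclideanSpace ℝ (Fin n))} {C : ℝ≥0∞} {c : ℝ}

local notation "𝔼" => EuclideanSpace ℝ (Fin n)

def IsCongruentPacking (S : Set (𝔼 ≃ᵢ 𝔼)) (K : Set 𝔼) : Prop :=
  S.Countable ∧ S.Pairwise fun g h => interior (g '' K) ∩ interior (h '' K) = ∅

theorem IsCongruentPacking.congrDensity_le_deltaC (hS : IsCongruentPacking S K) :
    congrDensity n S K ≤ deltaC n K :=
  le_iSup₂ (f := fun S (_ : IsCongruentPacking S K) => congrDensity n S K) S hS

theorem deltaC_le {a : ℝ≥0∞} (h : ∀ S, IsCongruentPacking S K → congrDensity n S K ≤ a) :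
    deltaC n K ≤ a :=
  iSup₂_le h

theorem IsCongruentPacking.mono (hS : IsCongruentPacking S K) (hLK : L ⊆ K) :
    IsCongruentPacking S L := by
  refine ⟨hS.1, fun g hg h hh hne => subset_empty_iff.1 ?_⟩
  rw [← hS.2 hg hh hne]
  gcongr

theorem IsCongruentPacking.image_smulConj (hS : IsCongruentPacking S K) (hc : c ≠ 0) :
    IsCongruentPacking (smulConj c hc '' S) (c • K) := by
  refine ⟨hS.1.image _, ?_⟩
  rintro _ ⟨g, hg, rfl⟩ _ ⟨h, hh, rfl⟩ hne
  rw [smulConj_image_smul, smulConj_image_smul, interior_smul₀ hc, interior_smul₀ hc,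
    ← smul_set_inter₀ hc, hS.2 hg hh (ne_of_apply_ne _ hne), smul_set_empty]

noncomputable def coveredVolume (S : Set (𝔼 ≃ᵢ 𝔼)) (K : Set 𝔼) (R : ℝ) : ℝ≥0∞ :=
  ∑' g : S, volume ((g : 𝔼 ≃ᵢ 𝔼) '' K ∩ closedBall 0 R)

theorem congrDensity_eq_limsup :
    congrDensity n S K =
      limsup (fun R => coveredVolume S K R / volume (closedBall (0 : 𝔼) R)) atTop :=
  rfl

theorem volume_image_inter_closedBall_le (g : 𝔼 ≃ᵢ 𝔼) (hLK : L ⊆ K)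
    (hK : Bornology.IsBounded K) (hvol : volume K ≤ C * volume L) (R : ℝ) :
    volume (g '' K ∩ closedBall 0 R) ≤ C * volume (g '' L ∩ closedBall 0 (R + diam K)) := by
  rcases (g '' K ∩ closedBall 0 R).eq_empty_or_nonempty with he | ⟨_, ⟨x, hx, rfl⟩, hxR⟩
  · simp [he]
  have hsub : g '' L ⊆ closedBall 0 (R + diam K) := by
    rintro _ ⟨y, hy, rfl⟩
    rw [mem_closedBall] at hxR ⊢
    calc dist (g y) 0 ≤ dist (g y) (g x) + dist (g x) 0 := dist_triangle _ _ _
      _ ≤ diam K + R :=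
        add_le_add ((g.dist_eq y x).trans_le (dist_le_diam_of_mem hK (hLK hy) hx)) hxR
      _ = R + diam K := add_comm _ _
  calc volume (g '' K ∩ closedBall 0 R) ≤ volume (g '' K) := measure_mono inter_subset_left
    _ = volume K := g.isometry.volume_image K
    _ ≤ C * volume L := hvol
    _ = C * volume (g '' L ∩ closedBall 0 (R + diam K)) := by
      rw [inter_eq_left.2 hsub, g.isometry.volume_image]

theorem congrDensity_le_mul_of_subset (hC : C ≠ ⊤) (hLK : L ⊆ K) (hK : Bornology.IsBounded K)
    (hvol : volume K ≤ C * volume L) : congrDensity n S K ≤ C * congrDensity n S L := by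
  have hcov (R : ℝ) : coveredVolume S K R ≤ C * coveredVolume S L (R + diam K) := by
    rw [coveredVolume, coveredVolume, ← ENNReal.tsum_mul_left]
    exact ENNReal.tsum_le_tsum fun g => volume_image_inter_closedBall_le g hLK hK hvol R
  rw [congrDensity_eq_limsup, congrDensity_eq_limsup, ← ENNReal.limsup_const_mul_of_ne_top hC]
  calc _ ≤ limsup (fun R => C * (coveredVolume S L (R + diam K) /
        volume (closedBall (0 : 𝔼) R))) atTop :=
        limsup_le_limsup (Eventually.of_forall fun R => by
          dsimp only
          rw [← mul_div_assoc]
          exact ENNReal.div_le_div_right (hcov R) _)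
    _ ≤ _ := by
      rw [ENNReal.limsup_const_mul_of_ne_top hC, ENNReal.limsup_const_mul_of_ne_top hC]
      gcongr
      exact limsup_add_div_volume_closedBall_le _ _

theorem coveredVolume_image_smulConj (hc : c ≠ 0) (R : ℝ) :
    coveredVolume (smulConj c hc '' S) (c • K) (|c| * R) =
      ENNReal.ofReal (|c| ^ n) * coveredVolume S K R := by
  rw [coveredVolume, tsum_image (fun h : 𝔼 ≃ᵢ 𝔼 => volume (h '' (c • K) ∩ closedBall 0 (|c| * R)))
    (smulConj_injective hc).injOn, coveredVolume, ← ENNReal.tsum_mul_left]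
  refine tsum_congr fun g => ?_
  rw [smulConj_image_smul, closedBall_zero_abs_mul hc, ← smul_set_inter₀ hc,
    Measure.addHaar_smul, finrank_euclideanSpace_fin, abs_pow]

theorem congrDensity_image_smulConj (hc : c ≠ 0) :
    congrDensity n (smulConj c hc '' S) (c • K) = congrDensity n S K := by
  have hscale (R : ℝ) : coveredVolume (smulConj c hc '' S) (c • K) (|c| * R) /
      volume (closedBall (0 : 𝔼) (|c| * R)) = coveredVolume S K R / volume (closedBall (0 : 𝔼) R) := by
    rw [coveredVolume_image_smulConj, closedBall_zero_abs_mul hc, Measure.addHaar_smul,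
      finrank_euclideanSpace_fin, abs_pow, ENNReal.mul_div_mul_left _ _
        (ENNReal.ofReal_pos.2 (by positivity)).ne' ENNReal.ofReal_ne_top]
  have hmap : map (|c| * ·) atTop = atTop := (OrderIso.mulLeft₀ |c| (abs_pos.2 hc)).map_atTop
  rw [congrDensity_eq_limsup, congrDensity_eq_limsup, ← hmap, ← limsup_comp, hmap]
  exact congrArg (limsup · atTop) (funext hscale)

theorem deltaC_le_mul_of_subset (hC : C ≠ ⊤) (hLK : L ⊆ K) (hK : Bornology.IsBounded K)
    (hvol : volume K ≤ C * volume L) : deltaC n K ≤ C * deltaC n L :=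
  deltaC_le fun _ hS => (congrDensity_le_mul_of_subset hC hLK hK hvol).trans
    (mul_le_mul_right (hS.mono hLK).congrDensity_le_deltaC _)

theorem deltaC_le_deltaC_smul (hc : c ≠ 0) (K : Set 𝔼) : deltaC n K ≤ deltaC n (c • K) :=
  deltaC_le fun _ hS =>
    (congrDensity_image_smulConj hc).ge.trans (hS.image_smulConj hc).congrDensity_le_deltaC

theorem deltaC_smul (hc : c ≠ 0) (K : Set 𝔼) : deltaC n (c • K) = deltaC n K :=
  le_antisymm (by simpa [inv_smul_smul₀ hc] using deltaC_le_deltaC_smul (inv_ne_zero hc) (c • K))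
    (deltaC_le_deltaC_smul hc K)

end Density

theorem stmt_7_general (n : ℕ) (K K₀ : Set (EuclideanSpace ℝ (Fin n)))
    (hKcomp : IsCompact K) (hKconv : Convex ℝ K)
    (hK₀comp : IsCompact K₀) (hK₀conv : Convex ℝ K₀)
    (hKl : closedBall (0 : EuclideanSpace ℝ (Fin n)) 1 ⊆ K)
    (hK₀l : closedBall (0 : EuclideanSpace ℝ (Fin n)) 1 ⊆ K₀)
    (r : ℝ) (hr : r = hausdorffDist K K₀) :
    deltaC n K ≤ ENNReal.ofReal ((1 + r) ^ (2 * n)) * deltaC n K₀ := by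
  set c := 1 + r with hc_def
  have hc : 0 < c := by linarith [hr ▸ hausdorffDist_nonneg (s := K) (t := K₀)]
  have hKsub : K ⊆ c • K₀ := by
    rw [hc_def, hr]
    exact subset_one_add_hausdorffDist_smul hK₀comp hK₀conv hK₀l hKcomp.isBounded
  have hK₀sub : K₀ ⊆ c • K := by
    rw [hc_def, hr, hausdorffDist_comm]
    exact subset_one_add_hausdorffDist_smul hKcomp hKconv hKl hK₀comp.isBounded
  have hvol : volume K ≤ ENNReal.ofReal (c ^ (2 * n)) * volume (c⁻¹ • K₀) := calc
    volume K ≤ ENNReal.ofReal (c ^ n) * volume K₀ := by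
      simpa only [finrank_euclideanSpace_fin] using volume_le_of_subset_smul hc.le hKsub
    _ ≤ ENNReal.ofReal (c ^ n) * (ENNReal.ofReal (c ^ n) * volume (c⁻¹ • K₀)) := by
      gcongr
      simpa only [finrank_euclideanSpace_fin] using
        volume_le_of_subset_smul hc.le (smul_inv_smul₀ hc.ne' K₀).superset
    _ = ENNReal.ofReal (c ^ (2 * n)) * volume (c⁻¹ • K₀) := by
      rw [← mul_assoc, ← ENNReal.ofReal_mul (by positivity), ← pow_add, two_mul]
  calc deltaC n K ≤ ENNReal.ofReal (c ^ (2 * n)) * deltaC n (c⁻¹ • K₀) :=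
        deltaC_le_mul_of_subset ENNReal.ofReal_ne_top ((subset_smul_set_iff₀ hc.ne').1 hK₀sub)
          hKcomp.isBounded hvol
    _ = ENNReal.ofReal (c ^ (2 * n)) * deltaC n K₀ := by rw [deltaC_smul (inv_ne_zero hc.ne')]

/-- Let `K, K₀ ∈ 𝒦^{n*}` and let `r = d_H(K, K₀)` be their Hausdorff distance.
Then `δ^c(K) ≤ (1+r)^{2n} · δ^c(K₀)`. -/
theorem stmt_7 (n : ℕ) (hn : 1 ≤ n) (K K₀ : Set (EuclideanSpace ℝ (Fin n)))
    (hKcomp : IsCompact K) (hKconv : Convex ℝ K) (hKint : (interior K).Nonempty)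
    (hK₀comp : IsCompact K₀) (hK₀conv : Convex ℝ K₀) (hK₀int : (interior K₀).Nonempty)
    (hKl : closedBall (0 : EuclideanSpace ℝ (Fin n)) 1 ⊆ K) (hKu : K ⊆ closedBall 0 n)
    (hK₀l : closedBall (0 : EuclideanSpace ℝ (Fin n)) 1 ⊆ K₀) (hK₀u : K₀ ⊆ closedBall 0 n)
    (r : ℝ) (hr : r = hausdorffDist K K₀) :
    deltaC n K ≤ ENNReal.ofReal ((1 + r) ^ (2 * n)) * deltaC n K₀ :=
  stmt_7_general n K K₀ hKcomp hKconv hK₀comp hK₀conv hKl hK₀l r hr
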